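/- Every generalized 2-Baer group is locally nilpotent. -/

import Mathlib

/-!
If `⟨x⟩` is 2-subnormal, say `⟨x⟩ ⊴ K ⊴ G`, then the normal closure `N = ⟨x^G⟩` lies in `K`
and hence normalizes `⟨x⟩`. The automorphism group of a cyclic group is abelian, so `[N, N]`
centralizes `x`; being normal, it then centralizes all of `N`, and `N` is nilpotent of class
at most 2. If `T₂(G) ≠ G`, pick `t ∉ T₂(G)`: every `g ∈ T₂(G)` is `(g t) t⁻¹` with both
factors outside `T₂(G)`, so every element of `G` is a product of two elements `u, v` with
2-subnormal cyclic subgroups. A finitely generated subgroup therefore lies in finitely many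
of the nilpotent normal subgroups `⟨u^G⟩`, whose product is nilpotent by Fitting's theorem.
-/

/-- A subgroup H is 2-subnormal in G if H ⊴ K ⊴ G for some subgroup K. -/
def IsTwoSubnormal {G : Type*} [Group G] (H : Subgroup G) : Prop :=
  ∃ K : Subgroup G, H ≤ K ∧ (H.subgroupOf K).Normal ∧ K.Normal

/-- T₂(G) is the subgroup generated by all elements whose cyclic subgroup is not
2-subnormal in G. -/
def T2 (G : Type*) [Group G] : Subgroup G :=
  Subgroup.closure {x : G | ¬ IsTwoSubnormal (Subgroup.zpowers x)}

open Subgroup Finset.HasAntidiagonal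
open scoped commutatorElement

namespace Subgroup

variable {G : Type*} [Group G]

theorem commutator_le_iff_le_comap_centralizer {H K R : Subgroup G} [R.Normal] :
    ⁅H, K⁆ ≤ R ↔ K ≤ (centralizer (H.map (QuotientGroup.mk' R) : Set (G ⧸ R))).comap
      (QuotientGroup.mk' R) := by
  rw [← map_le_iff_le_comap, le_centralizer_iff, ← commutator_eq_bot_iff_le_centralizer,
    ← map_commutator, ← le_bot_iff, map_le_iff_le_comap, MonoidHom.comap_bot,
    QuotientGroup.ker_mk']

theorem commutator_sup_le_iff {H K₁ K₂ R : Subgroup G} [R.Normal] :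
    ⁅H, K₁ ⊔ K₂⁆ ≤ R ↔ ⁅H, K₁⁆ ≤ R ∧ ⁅H, K₂⁆ ≤ R := by
  simp only [commutator_le_iff_le_comap_centralizer, sup_le_iff]

theorem iSup_commutator_le_iff {ι : Sort*} {H : ι → Subgroup G} {K R : Subgroup G} [R.Normal] :
    ⁅⨆ i, H i, K⁆ ≤ R ↔ ∀ i, ⁅H i, K⁆ ≤ R := by
  simp only [commutator_comm _ K, commutator_le_iff_le_comap_centralizer, iSup_le_iff]

/-- `γ_n(A)` in the one-based indexing of the literature (`γ₁(A) = A`), extended by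
`γ₀(A) = ⊤`; in this indexing `γ_n(A ⊔ B)` is covered by the `γ_i(A) ⊓ γ_j(B)` with
`i + j = n`. -/
def lowerCentralTerm (A : Subgroup G) : ℕ → Subgroup G
  | 0 => ⊤
  | n + 1 => A.lowerCentralSeries n

instance lowerCentralTerm_normal (A : Subgroup G) [A.Normal] (n : ℕ) :
    (A.lowerCentralTerm n).Normal := by
  cases n with
  | zero => exact inferInstanceAs (⊤ : Subgroup G).Normal
  | succ n => exact lowerCentralSeries_normal A n

theorem commutator_lowerCentralTerm_le (A : Subgroup G) [A.Normal] (n : ℕ) :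
    ⁅A.lowerCentralTerm n, A⁆ ≤ A.lowerCentralTerm (n + 1) := by
  cases n with
  | zero => exact commutator_le_right ⊤ A
  | succ n => exact le_rfl

theorem lowerCentralTerm_eq_bot {A : Subgroup G} {a i : ℕ} (ha : A.lowerCentralSeries a = ⊥)
    (hi : a < i) : A.lowerCentralTerm i = ⊥ := by
  obtain ⟨i, rfl⟩ := Nat.exists_eq_add_one_of_ne_zero (Nat.ne_zero_of_lt hi)
  exact le_bot_iff.mp (ha ▸ A.lowerCentralSeries_antitone (Nat.le_of_lt_succ hi))

theorem lowerCentralSeries_sup_le (A B : Subgroup G) [A.Normal] [B.Normal] (n : ℕ) :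
    (A ⊔ B).lowerCentralSeries n ≤
      ⨆ p ∈ antidiagonal (n + 1), A.lowerCentralTerm p.1 ⊓ B.lowerCentralTerm p.2 := by
  have le_term {i j m : ℕ} (h : i + j = m) :
      A.lowerCentralTerm i ⊓ B.lowerCentralTerm j ≤
        ⨆ p ∈ antidiagonal m, A.lowerCentralTerm p.1 ⊓ B.lowerCentralTerm p.2 :=
    le_iSup₂_of_le (i, j) (mem_antidiagonal.mpr h) le_rfl
  induction n with
  | zero =>
    exact sup_le (le_inf le_rfl le_top |>.trans (le_term (i := 1) (j := 0) rfl))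
      (le_inf le_top le_rfl |>.trans (le_term (i := 0) (j := 1) rfl))
  | succ n ih =>
    refine (commutator_mono ih le_rfl).trans <| iSup_commutator_le_iff.mpr fun ⟨i, j⟩ =>
      iSup_commutator_le_iff.mpr fun hij => commutator_sup_le_iff.mpr ⟨?_, ?_⟩
    all_goals rw [mem_antidiagonal] at hij
    · exact le_inf ((commutator_mono inf_le_left le_rfl).trans
          (commutator_lowerCentralTerm_le A i)) ((commutator_mono inf_le_right le_rfl).trans
          (commutator_le_left _ _)) |>.trans (le_term (by omega))
    · exact le_inf ((commutator_mono inf_le_left le_rfl).trans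
          (commutator_le_left _ _)) ((commutator_mono inf_le_right le_rfl).trans
          (commutator_lowerCentralTerm_le B j)) |>.trans (le_term (by omega))

theorem isNilpotent_sup {A B : Subgroup G} [A.Normal] [B.Normal] [Group.IsNilpotent A]
    [Group.IsNilpotent B] : Group.IsNilpotent (A ⊔ B : Subgroup G) := by
  obtain ⟨a, ha⟩ := (isNilpotent_iff_lowerCentralSeries A).mp ‹_›
  obtain ⟨b, hb⟩ := (isNilpotent_iff_lowerCentralSeries B).mp ‹_›
  refine isNilpotent_of_lowerCentralSeries_eq_bot (n := a + b + 1) (le_bot_iff.mp ?_)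
  refine (lowerCentralSeries_sup_le A B _).trans (iSup₂_le fun ⟨i, j⟩ hij => ?_)
  rw [mem_antidiagonal] at hij
  dsimp only
  rcases Nat.lt_or_ge a i with hi | hi
  · exact inf_le_left.trans (lowerCentralTerm_eq_bot ha hi).le
  · exact inf_le_right.trans (lowerCentralTerm_eq_bot hb (by omega)).le

theorem isNilpotent_finset_sup {ι : Type*} (s : Finset ι) (H : ι → Subgroup G)
    [∀ i, (H i).Normal] (hH : ∀ i ∈ s, Group.IsNilpotent (H i)) :
    Group.IsNilpotent (s.sup H : Subgroup G) := by
  classical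
  induction s using Finset.induction_on with
  | empty => rw [Finset.sup_empty]; exact Group.isNilpotent_of_subsingleton
  | insert i s _ ih =>
    have : (s.sup H).Normal := by rw [Finset.sup_eq_iSup]; infer_instance
    have := hH i (Finset.mem_insert_self i s)
    have := ih fun j hj => hH j (Finset.mem_insert_of_mem hj)
    rw [Finset.sup_insert]
    exact isNilpotent_sup

theorem commutator_normalizer_le_centralizer_of_isCyclic (H : Subgroup G) [IsCyclic H] :
    ⁅normalizer (H : Set G), normalizer (H : Set G)⁆ ≤ centralizer (H : Set G) := by
  refine commutator_le.mpr fun u hu v hv => ?_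
  let φ := H.normalizerMonoidHom
  -- `MulAut H ≃* (ZMod (Nat.card H))ˣ` is commutative
  have hφ : Commute (φ ⟨u, hu⟩) (φ ⟨v, hv⟩) :=
    .of_map (IsCyclic.mulAutMulEquiv H).injective (.all _ _)
  have hker : ⁅(⟨u, hu⟩ : normalizer (H : Set G)), ⟨v, hv⟩⁆ ∈ φ.ker := by
    rw [MonoidHom.mem_ker, map_commutatorElement, hφ.commutator_eq]
  rw [normalizerMonoidHom_ker] at hker
  exact hker

end Subgroup

theorem Subgroup.Normal.isTwoSubnormal {G : Type*} [Group G] {H : Subgroup G} (hH : H.Normal) :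
    IsTwoSubnormal H :=
  ⟨H, le_rfl, by rw [subgroupOf_self]; infer_instance, hH⟩

namespace IsTwoSubnormal

variable {G : Type*} [Group G] {x : G}

theorem normalClosure_le_normalizer (h : IsTwoSubnormal (zpowers x)) :
    normalClosure {x} ≤ normalizer (zpowers x : Set G) := by
  obtain ⟨K, hxK, hK, _⟩ := h
  exact (normalClosure_le_normal (Set.singleton_subset_iff.mpr (hxK (mem_zpowers x)))).trans
    (le_normalizer_of_normal_subgroupOf hxK)

theorem isNilpotent_normalClosure (h : IsTwoSubnormal (zpowers x)) :
    Group.IsNilpotent (normalClosure {x} : Subgroup G) := by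
  set N : Subgroup G := normalClosure {x}
  have hN := h.normalClosure_le_normalizer
  have hNN : zpowers x ≤ centralizer (⁅N, N⁆ : Subgroup G) := le_centralizer_iff.mp <|
    (commutator_mono hN hN).trans (commutator_normalizer_le_centralizer_of_isCyclic (zpowers x))
  have hN_le : N ≤ centralizer (⁅N, N⁆ : Subgroup G) :=
    normalClosure_le_normal (Set.singleton_subset_iff.mpr (hNN (mem_zpowers x)))
  refine isNilpotent_of_lowerCentralSeries_eq_bot (n := 2) ?_
  rw [Subgroup.lowerCentralSeries_succ, Subgroup.lowerCentralSeries_succ,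
    Subgroup.lowerCentralSeries_zero, commutator_eq_bot_iff_le_centralizer,
    le_centralizer_iff]
  exact hN_le

end IsTwoSubnormal

theorem isTwoSubnormal_of_notMem_T2 {G : Type*} [Group G] {x : G} (hx : x ∉ T2 G) :
    IsTwoSubnormal (zpowers x) := by
  by_contra h
  exact hx (subset_closure h)

theorem exists_isTwoSubnormal_mul_eq {G : Type*} [Group G] (hG : T2 G ≠ ⊤) (g : G) :
    ∃ u v : G, IsTwoSubnormal (zpowers u) ∧ IsTwoSubnormal (zpowers v) ∧ u * v = g := by
  obtain ⟨t, ht⟩ : ∃ t, t ∉ T2 G := by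
    by_contra! h
    exact hG (eq_top_iff' _ |>.mpr h)
  by_cases hg : g ∈ T2 G
  · refine ⟨g * t, t⁻¹, isTwoSubnormal_of_notMem_T2 fun hgt => ht ?_,
      isTwoSubnormal_of_notMem_T2 (ht ∘ (T2 G).inv_mem_iff.mp), by group⟩
    simpa using (T2 G).mul_mem ((T2 G).inv_mem hg) hgt
  · refine ⟨g, 1, isTwoSubnormal_of_notMem_T2 hg, ?_, mul_one g⟩
    rw [zpowers_one_eq_bot]
    exact normal_bot.isTwoSubnormal

/-- Every generalized 2-Baer group is locally nilpotent: every
finitely generated subgroup is nilpotent. -/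
theorem stmt_9 {G : Type*} [Group G] (hG : T2 G ≠ ⊤) :
    ∀ S : Finset G, Group.IsNilpotent ↥(Subgroup.closure (S : Set G)) := by
  intro S
  choose u v hu hv huv using exists_isTwoSubnormal_mul_eq hG
  let M : G → Subgroup G := fun g => normalClosure {u g} ⊔ normalClosure {v g}
  have hM : ∀ g ∈ S, Group.IsNilpotent (M g) := fun g _ =>
    have := (hu g).isNilpotent_normalClosure
    have := (hv g).isNilpotent_normalClosure
    isNilpotent_sup
  have hSM : closure (S : Set G) ≤ S.sup M := by
    refine closure_le _ |>.mpr fun g hg => Finset.le_sup (f := M) hg ?_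
    have : u g * v g ∈ M g := mul_mem_sup (subset_normalClosure rfl) (subset_normalClosure rfl)
    rwa [huv] at this
  have := isNilpotent_finset_sup S M hM
  exact Group.nilpotent_of_mulEquiv (subgroupOfEquivOfLe hSM)
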